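/- Let F be a field of characteristic zero, A = F[x,y], n > 1. Every element of the kernel of d²(a,b) = y^{n-1}(∂a/∂x + y·∂b/∂y) − (n−1)·y^{n-1}·b can be written uniquely as μ(b) + (α(y), 0) with b ∈ A and α(y) ∈ F[y], where μ(b) = (∫((n−1)b − y·∂b/∂y) dx, b). -/

import Mathlib

/-!
Since `y^{n-1}` is a nonzerodivisor, `(a, b) ∈ Ker d²` says exactly that
`∂a/∂x = (n-1)b - y ∂b/∂y`, so the first component of `μ(b)` is `∫ (∂a/∂x) dx`.
On each monomial `∫ dx` undoes `∂/∂x` (characteristic zero) unless the monomial is free of `x`,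
so `a` differs from it by a polynomial in `y` alone. Uniqueness holds because `b` is read off
the second component and `y` is transcendental over `F`.
-/

open MvPolynomial

noncomputable section

/-- Antiderivative in `x` with zero constant-in-`x` term. -/
def antiX (F : Type*) [Field F] :
    MvPolynomial (Fin 2) F →ₗ[F] MvPolynomial (Fin 2) F :=
  (Finsupp.lsum F fun m : Fin 2 →₀ ℕ =>
    (((m 0 : F) + 1)⁻¹) •
      (MvPolynomial.monomial (m + Finsupp.single 0 1) : F →ₗ[F] MvPolynomial (Fin 2) F))
    ∘ₗ (AddMonoidAlgebra.coeffLinearEquiv F).toLinearMap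

/-- `μ(b) = (∫((n−1)b − y·∂b/∂y) dx, b)`. -/
def mu (F : Type*) [Field F] (n : ℕ) (b : MvPolynomial (Fin 2) F) :
    MvPolynomial (Fin 2) F × MvPolynomial (Fin 2) F :=
  (antiX F (C ((n : F) - 1) * b - X 1 * pderiv 1 b), b)

/-- `d²(a,b) = y^{n-1}(∂a/∂x + y·∂b/∂y) − (n−1)·y^{n-1}·b`. -/
def d2 (F : Type*) [Field F] (n : ℕ)
    (p : MvPolynomial (Fin 2) F × MvPolynomial (Fin 2) F) : MvPolynomial (Fin 2) F :=
  X 1 ^ (n - 1) * (pderiv 0 p.1 + X 1 * pderiv 1 p.2) - C ((n : F) - 1) * X 1 ^ (n - 1) * p.2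

lemma antiX_monomial {F : Type*} [Field F] (m : Fin 2 →₀ ℕ) (c : F) :
    antiX F (monomial m c) = ((m 0 : F) + 1)⁻¹ • monomial (m + Finsupp.single 0 1) c := by
  rw [antiX, ← single_eq_monomial]
  exact Finsupp.lsum_single F _ _ _

lemma antiX_pderiv_monomial {F : Type*} [Field F] [CharZero F] {u : Fin 2 →₀ ℕ}
    (hu : u 0 ≠ 0) (c : F) : antiX F (pderiv 0 (monomial u c)) = monomial u c := by
  obtain ⟨v, rfl⟩ : ∃ v, u = v + Finsupp.single 0 1 :=
    ⟨u - Finsupp.single 0 1, by ext i; fin_cases i <;> simp; omega⟩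
  rw [pderiv_monomial, add_tsub_cancel_right, antiX_monomial, smul_monomial]
  congr 1
  simp only [Finsupp.coe_add, Pi.add_apply, Finsupp.single_eq_same, Nat.cast_add, Nat.cast_one,
    smul_eq_mul]
  field_simp

lemma monomial_eq_aeval_X_one {R : Type*} [CommSemiring R] {u : Fin 2 →₀ ℕ} (hu : u 0 = 0)
    (c : R) :
    monomial u c =
      Polynomial.aeval (X 1 : MvPolynomial (Fin 2) R) (Polynomial.monomial (u 1) c) := by
  have hu' : u = Finsupp.single 1 (u 1) := by ext i; fin_cases i <;> simp [hu]
  rw [Polynomial.aeval_monomial, algebraMap_eq, C_mul_X_pow_eq_monomial, ← hu']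

lemma exists_eq_antiX_pderiv_add_aeval {F : Type*} [Field F] [CharZero F]
    (p : MvPolynomial (Fin 2) F) :
    ∃ α : Polynomial F,
      p = antiX F (pderiv 0 p) + Polynomial.aeval (X 1 : MvPolynomial (Fin 2) F) α := by
  induction p using MvPolynomial.induction_on' with
  | add p q hp hq =>
    obtain ⟨α, hα⟩ := hp
    obtain ⟨β, hβ⟩ := hq
    exact ⟨α + β, by simp only [map_add]; linear_combination hα + hβ⟩
  | monomial u c =>
    by_cases hu : u 0 = 0
    · refine ⟨Polynomial.monomial (u 1) c, ?_⟩
      rw [pderiv_monomial, hu, Nat.cast_zero, mul_zero, monomial_zero, map_zero, zero_add,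
        monomial_eq_aeval_X_one hu]
    · exact ⟨0, by rw [map_zero, add_zero, antiX_pderiv_monomial hu]⟩

lemma d2_eq_zero_iff {F : Type*} [Field F] (n : ℕ) (a b : MvPolynomial (Fin 2) F) :
    d2 F n (a, b) = 0 ↔ pderiv 0 a = C ((n : F) - 1) * b - X 1 * pderiv 1 b := by
  have : d2 F n (a, b) =
      X 1 ^ (n - 1) * (pderiv 0 a - (C ((n : F) - 1) * b - X 1 * pderiv 1 b)) := by
    unfold d2; ring
  rw [this, mul_eq_zero, sub_eq_zero, or_iff_right (pow_ne_zero _ (X_ne_zero 1))]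

theorem stmt4_general (F : Type*) [Field F] [CharZero F] (n : ℕ)
    (a b : MvPolynomial (Fin 2) F) (h : d2 F n (a, b) = 0) :
    ∃! q : MvPolynomial (Fin 2) F × Polynomial F,
      (a, b) = mu F n q.1 +
        (Polynomial.aeval (X 1 : MvPolynomial (Fin 2) F) q.2, 0) := by
  have ha : pderiv 0 a = C ((n : F) - 1) * b - X 1 * pderiv 1 b := (d2_eq_zero_iff n a b).1 h
  obtain ⟨α, hα⟩ := exists_eq_antiX_pderiv_add_aeval a
  refine ⟨(b, α), ?_, ?_⟩
  · dsimp only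
    rw [mu, ← ha, Prod.mk_add_mk, add_zero, ← hα]
  · rintro ⟨b', α'⟩ hq
    simp only [mu, Prod.mk_add_mk, add_zero, Prod.mk.injEq] at hq
    obtain ⟨ha', rfl⟩ := hq
    rw [← ha] at ha'
    have hαα' := add_left_cancel (ha'.symm.trans hα)
    rw [transcendental_iff_injective.1 (transcendental_X F 1) hαα']

/-- Every element of `Ker d²` is uniquely of the form `μ(b) + (α(y), 0)` with `b ∈ A` and
`α(y) ∈ F[y]`. -/
theorem stmt4 (F : Type*) [Field F] [CharZero F] (n : ℕ) (hn : 1 < n)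
    (a b : MvPolynomial (Fin 2) F) (h : d2 F n (a, b) = 0) :
    ∃! q : MvPolynomial (Fin 2) F × Polynomial F,
      (a, b) = mu F n q.1 +
        (Polynomial.aeval (X 1 : MvPolynomial (Fin 2) F) q.2, 0) :=
  stmt4_general F n a b h
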